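/- arXiv:2501.18260 — 7 statements merged into one kernel-verified Lean document; each statement's English description precedes it below -/
import Mathlib

section
/- Let A be a superalgebra over an integral domain R of characteristic ≠ 2, finitely generated projective as an R-module, equipped with an even R-linear map t : A → R vanishing on the odd part, satisfying t(xy) = t(yx) for all x, y ∈ A, and such that a ↦ t(−·a) is an (A,A)-superbimodule isomorphism A ≅ Hom_R(A, R). Then the map z ↦ t(−·z) restricts to an isomorphism from the center Z(A) onto Hom_R(A/[A,A], R), where [A,A] is the R-span of all commutators xy − yx. -/
/-!
For a trace `t`, `t ((x * y - y * x) * a) = t (y * (a * x - x * a))`. Hence the functional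
`t (- * a)` kills all commutators exactly when `t (- * [a, x])` vanishes for every `x`, which by
nondegeneracy means that `a` is central. So the isomorphism `A ≅ Hom_R(A, R)` carries `Z(A)` onto
the annihilator of `[A, A]`, which is the dual of the cocenter.
-/

section

variable {R A : Type*} [CommRing R] [Ring A] [Algebra R A]

variable (R A) in
abbrev commutatorSpan : Submodule R A :=
  Submodule.span R {u : A | ∃ x y : A, u = x * y - y * x}

def mulRightDual (t : A →ₗ[R] R) : A →ₗ[R] Module.Dual R A :=
  (LinearMap.mul R A).flip.compr₂ t

@[simp]
theorem mulRightDual_apply (t : A →ₗ[R] R) (a u : A) : mulRightDual t a u = t (u * a) := rfl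

theorem trace_commutator_mul {t : A →ₗ[R] R} (htr : ∀ x y : A, t (x * y) = t (y * x))
    (x y a : A) : t ((x * y - y * x) * a) = t (y * (a * x - x * a)) := by
  have hcyc : t (x * y * a) = t (y * a * x) := by rw [mul_assoc, htr]
  rw [sub_mul, mul_sub, map_sub, map_sub, hcyc, mul_assoc, mul_assoc]

theorem mulRightDual_mem_dualAnnihilator_iff (t : A →ₗ[R] R) (a : A) :
    mulRightDual t a ∈ (commutatorSpan R A).dualAnnihilator ↔
      ∀ x y : A, t ((x * y - y * x) * a) = 0 := by
  rw [Submodule.mem_dualAnnihilator]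
  change commutatorSpan R A ≤ LinearMap.ker (mulRightDual t a) ↔ _
  simp only [Submodule.span_le, Set.subset_def, Set.mem_ofPred_eq, SetLike.mem_coe,
    LinearMap.mem_ker, mulRightDual_apply, forall_exists_index]
  exact ⟨fun h x y => h _ x y rfl, fun h _ x y hu => hu ▸ h x y⟩

theorem mem_center_iff_mulRightDual_mem_dualAnnihilator {t : A →ₗ[R] R}
    (htr : ∀ x y : A, t (x * y) = t (y * x)) (hinj : Function.Injective (mulRightDual t))
    (a : A) :
    a ∈ Subalgebra.center R A ↔ mulRightDual t a ∈ (commutatorSpan R A).dualAnnihilator := by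
  simp only [mulRightDual_mem_dualAnnihilator_iff, trace_commutator_mul htr]
  refine Subalgebra.mem_center_iff.trans (forall_congr' fun x => ?_)
  rw [eq_comm, ← sub_eq_zero, ← map_eq_zero_iff _ hinj, LinearMap.ext_iff]
  simp only [mulRightDual_apply, LinearMap.zero_apply]

end

theorem center_dual_of_cocenter_of_symmetric_general
    (R : Type*) [CommRing R]
    (A : Type*) [Ring A] [Algebra R A]
    (t : A →ₗ[R] R)
    (htr : ∀ x y : A, t (x * y) = t (y * x))
    (hiso : Function.Bijective fun a : A => t ∘ₗ LinearMap.mulRight R a) :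
    ∃ e : Subalgebra.center R A ≃ₗ[R]
        Module.Dual R (A ⧸ Submodule.span R {u : A | ∃ x y : A, u = x * y - y * x}),
      ∀ (z : Subalgebra.center R A) (a : A),
        e z (Submodule.Quotient.mk a) = t (a * (z : A)) := by
  have hbij : Function.Bijective (mulRightDual t) := hiso
  have hmap : (Subalgebra.toSubmodule (Subalgebra.center R A)).map (mulRightDual t) =
      (commutatorSpan R A).dualAnnihilator := by
    rw [← Submodule.map_comap_eq_of_surjective hbij.2 (commutatorSpan R A).dualAnnihilator]
    congr 1
    ext a
    exact mem_center_iff_mulRightDual_mem_dualAnnihilator htr hbij.1 a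
  exact ⟨((LinearEquiv.ofBijective _ hbij).ofSubmodules _ _ hmap).trans
    (Submodule.dualQuotEquivDualAnnihilator _).symm, fun z a => rfl⟩

/-- If a superalgebra `A` over an integral domain `R` of characteristic `≠ 2`
(finitely generated projective as an `R`-module) carries an even `R`-linear
form `t` which vanishes on the odd part, is a trace (`t (x y) = t (y x)`), and
induces an isomorphism `A ≅ Hom_R(A, R)` via `a ↦ t (- * a)`, then `z ↦ t (- * z)`
restricts to an isomorphism from the center `Z(A)` onto the dual of the
cocenter `A / [A, A]`. -/
theorem center_dual_of_cocenter_of_symmetric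
    (R : Type*) [CommRing R] [IsDomain R] (hchar : (2 : R) ≠ 0)
    (A : Type*) [Ring A] [Algebra R A] [Module.Finite R A] [Module.Projective R A]
    (𝒜 : ZMod 2 → Submodule R A) [GradedAlgebra 𝒜]
    (t : A →ₗ[R] R)
    (hodd : ∀ x ∈ 𝒜 1, t x = 0)
    (htr : ∀ x y : A, t (x * y) = t (y * x))
    (hiso : Function.Bijective fun a : A => t ∘ₗ LinearMap.mulRight R a) :
    ∃ e : Subalgebra.center R A ≃ₗ[R]
        Module.Dual R (A ⧸ Submodule.span R {u : A | ∃ x y : A, u = x * y - y * x}),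
      ∀ (z : Subalgebra.center R A) (a : A),
        e z (Submodule.Quotient.mk a) = t (a * (z : A)) :=
  center_dual_of_cocenter_of_symmetric_general R A t htr hiso
end

section
/- Let A be a superalgebra over an integral domain R of characteristic ≠ 2, finitely generated projective as an R-module, equipped with an even R-linear map t : A → R vanishing on the odd part, satisfying t(xy) = (−1)^{|x||y|} t(yx) for all homogeneous x, y ∈ A, and such that a ↦ t(−·a) is an (A,A)-superbimodule isomorphism A ≅ Hom_R(A, R). Then the map z ↦ t(−·z) restricts to an isomorphism from the supercenter SupZ(A) onto Hom_R(A/[A,A]⁻, R), where [A,A]⁻ is the R-span of all supercommutators xy − (−1)^{|x||y|} yx. -/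
/-!
Write `[x, y] = x y - (-1)^{|x||y|} y x`. The form `t` identifies `A` with its dual via
`z ↦ t (- * z)`, and a form on `A ⧸ [A, A]⁻` is a form on `A` vanishing on `[A, A]⁻`, so it
suffices to show that `z` is in the supercenter exactly when `t ([x, y] z) = 0` for all
homogeneous `x, y`. Both directions rest on the supertrace identity `t ([x, y] z) = t (x [y, z])`
for homogeneous `x, y, z`: for supercentral `z` the right-hand side vanishes. Conversely, since
`t` vanishes on the odd part, the condition passes to the homogeneous components of `z`, and for
homogeneous `z` nondegeneracy of `t` turns `t (x [y, z]) = 0` for all `x` into `[y, z] = 0`.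
-/

open DirectSum

theorem neg_one_pow_mul_self {R : Type*} [Monoid R] [HasDistribNeg R] (n : ℕ) :
    (-1 : R) ^ n * (-1) ^ n = 1 :=
  pow_mul_pow_eq_one n (by simp)

theorem neg_one_pow_val_mul_add {R : Type*} [Monoid R] [HasDistribNeg R] (i j k : ZMod 2) :
    (-1 : R) ^ (i.val * (j + k).val) = (-1) ^ (i.val * j.val) * (-1) ^ (i.val * k.val) := by
  rw [← pow_add]
  exact neg_one_pow_congr (by revert i j k; decide)

namespace SuperAlgebra

variable {R A : Type*} [CommRing R] [Ring A] [Algebra R A]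
  (𝒜 : ZMod 2 → Submodule R A) [GradedAlgebra 𝒜]

def superCenter : Submodule R A :=
  Submodule.span R {x : A | ∃ i : ZMod 2, x ∈ 𝒜 i ∧
    ∀ (j : ZMod 2), ∀ y ∈ 𝒜 j, x * y = ((-1 : R) ^ (i.val * j.val)) • (y * x)}

def superCommutators : Submodule R A :=
  Submodule.span R {u : A | ∃ (i j : ZMod 2) (x y : A),
    x ∈ 𝒜 i ∧ y ∈ 𝒜 j ∧ u = x * y - ((-1 : R) ^ (i.val * j.val)) • (y * x)}

def traceForm (t : A →ₗ[R] R) : A →ₗ[R] Module.Dual R A :=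
  (LinearMap.mul R A).flip.compr₂ t

def IsSupertrace (t : A →ₗ[R] R) : Prop :=
  ∀ (i j : ZMod 2), ∀ x ∈ 𝒜 i, ∀ y ∈ 𝒜 j, t (x * y) = (-1 : R) ^ (i.val * j.val) * t (y * x)

variable {𝒜}

theorem supercommutator_mem {i j : ZMod 2} {x y : A} (hx : x ∈ 𝒜 i) (hy : y ∈ 𝒜 j) :
    x * y - ((-1 : R) ^ (i.val * j.val)) • (y * x) ∈ 𝒜 (i + j) :=
  sub_mem (SetLike.mul_mem_graded hx hy)
    (Submodule.smul_mem _ _ (add_comm j i ▸ SetLike.mul_mem_graded hy hx))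

variable {t : A →ₗ[R] R}

theorem trace_supercommutator_mul (htr : IsSupertrace 𝒜 t) {i j k : ZMod 2} {x y z : A}
    (hx : x ∈ 𝒜 i) (hy : y ∈ 𝒜 j) (hz : z ∈ 𝒜 k) :
    t ((x * y - ((-1 : R) ^ (i.val * j.val)) • (y * x)) * z) =
      t (x * (y * z - ((-1 : R) ^ (j.val * k.val)) • (z * y))) := by
  have hyxz : t (y * (x * z)) = (-1 : R) ^ (j.val * (i + k).val) * t (x * z * y) :=
    htr j (i + k) y hy (x * z) (SetLike.mul_mem_graded hx hz)
  have hsign : (-1 : R) ^ (i.val * j.val) * (-1) ^ (j.val * i.val) = 1 := by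
    rw [mul_comm j.val]; exact neg_one_pow_mul_self _
  rw [sub_mul, mul_sub, smul_mul_assoc, mul_smul_comm, map_sub, map_sub, map_smul, map_smul,
    smul_eq_mul, smul_eq_mul, mul_assoc y, hyxz, neg_one_pow_val_mul_add, mul_assoc x y,
    mul_assoc x z]
  linear_combination (-((-1 : R) ^ (j.val * k.val) * t (x * (z * y)))) * hsign

theorem eq_zero_of_trace_homogeneous_mul_eq_zero
    (hinj : Function.Injective (traceForm t)) {w : A}
    (h : ∀ i, ∀ x ∈ 𝒜 i, t (x * w) = 0) : w = 0 := by
  refine (injective_iff_map_eq_zero _).mp hinj w (decompose_lhom_ext 𝒜 fun i => ?_)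
  ext ⟨x, hx⟩
  exact h i x hx

theorem trace_mul_eq_zero_of_ne (hodd : ∀ x ∈ 𝒜 1, t x = 0)
    {d m : ZMod 2} {u w : A} (hu : u ∈ 𝒜 d) (hw : w ∈ 𝒜 m) (hdm : d ≠ m) :
    t (u * w) = 0 := by
  have hodd_deg : ∀ d m : ZMod 2, d ≠ m → d + m = 1 := by decide
  exact hodd _ (hodd_deg d m hdm ▸ SetLike.mul_mem_graded hu hw)

theorem trace_mul_decompose (hodd : ∀ x ∈ 𝒜 1, t x = 0)
    {d : ZMod 2} {u : A} (hu : u ∈ 𝒜 d) (z : A) :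
    t (u * (decompose 𝒜 z d : A)) = t (u * z) := by
  classical
  conv_rhs => rw [← sum_support_decompose 𝒜 z]
  rw [Finset.mul_sum, map_sum, Finset.sum_eq_single d]
  · exact fun m _ hmd => trace_mul_eq_zero_of_ne hodd hu (SetLike.coe_mem _) (Ne.symm hmd)
  · intro hd
    rw [DFinsupp.notMem_support_iff.mp hd, ZeroMemClass.coe_zero, mul_zero, map_zero]

theorem superCenter_le_comap_dualAnnihilator (htr : IsSupertrace 𝒜 t) :
    superCenter 𝒜 ≤ (superCommutators 𝒜).dualAnnihilator.comap (traceForm t) := by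
  refine Submodule.span_le.mpr ?_
  rintro z ⟨k, hz, hzc⟩
  rw [SetLike.mem_coe, Submodule.mem_comap, Submodule.mem_dualAnnihilator]
  suffices superCommutators 𝒜 ≤ LinearMap.ker (traceForm t z) from fun u hu => this hu
  refine Submodule.span_le.mpr ?_
  rintro _ ⟨i, j, x, y, hx, hy, rfl⟩
  have hyz : y * z - ((-1 : R) ^ (j.val * k.val)) • (z * y) = 0 := by
    rw [hzc j y hy, smul_smul, mul_comm j.val, neg_one_pow_mul_self, one_smul, sub_self]
  change t (_ * z) = 0
  rw [trace_supercommutator_mul htr hx hy hz, hyz, mul_zero, map_zero]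

theorem supercentral_of_trace_supercommutator_mul_eq_zero (htr : IsSupertrace 𝒜 t)
    (hinj : Function.Injective (traceForm t)) {k : ZMod 2} {z : A} (hz : z ∈ 𝒜 k)
    (hC : ∀ (i j : ZMod 2), ∀ x ∈ 𝒜 i, ∀ y ∈ 𝒜 j,
      t ((x * y - ((-1 : R) ^ (i.val * j.val)) • (y * x)) * z) = 0)
    (j : ZMod 2) (y : A) (hy : y ∈ 𝒜 j) :
    z * y = ((-1 : R) ^ (k.val * j.val)) • (y * z) := by
  have hyz : y * z - ((-1 : R) ^ (j.val * k.val)) • (z * y) = 0 :=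
    eq_zero_of_trace_homogeneous_mul_eq_zero hinj fun i x hx => by
      rw [← trace_supercommutator_mul htr hx hy hz]
      exact hC i j x hx y hy
  rw [sub_eq_zero.mp hyz, smul_smul, mul_comm k.val, neg_one_pow_mul_self, one_smul]

theorem comap_dualAnnihilator_le_superCenter (hodd : ∀ x ∈ 𝒜 1, t x = 0)
    (htr : IsSupertrace 𝒜 t) (hinj : Function.Injective (traceForm t)) :
    (superCommutators 𝒜).dualAnnihilator.comap (traceForm t) ≤ superCenter 𝒜 := by
  classical
  intro z hz
  rw [Submodule.mem_comap, Submodule.mem_dualAnnihilator] at hz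
  rw [← sum_support_decompose 𝒜 z]
  refine Submodule.sum_mem _ fun m _ => Submodule.subset_span ⟨m, SetLike.coe_mem _, ?_⟩
  refine supercentral_of_trace_supercommutator_mul_eq_zero htr hinj (SetLike.coe_mem _) ?_
  intro i j x hx y hy
  have hu := supercommutator_mem (R := R) hx hy
  by_cases hm : i + j = m
  · subst hm
    rw [trace_mul_decompose hodd hu]
    exact hz _ (Submodule.subset_span ⟨i, j, x, y, hx, hy, rfl⟩)
  · exact trace_mul_eq_zero_of_ne hodd hu (SetLike.coe_mem _) hm

theorem superCenter_eq_comap_dualAnnihilator (hodd : ∀ x ∈ 𝒜 1, t x = 0)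
    (htr : IsSupertrace 𝒜 t) (hinj : Function.Injective (traceForm t)) :
    superCenter 𝒜 = (superCommutators 𝒜).dualAnnihilator.comap (traceForm t) :=
  le_antisymm (superCenter_le_comap_dualAnnihilator htr)
    (comap_dualAnnihilator_le_superCenter hodd htr hinj)

end SuperAlgebra

open SuperAlgebra in
theorem supercenter_dual_of_supercocenter_of_supersymmetric_general
    (R : Type*) [CommRing R]
    (A : Type*) [Ring A] [Algebra R A]
    (𝒜 : ZMod 2 → Submodule R A) [GradedAlgebra 𝒜]
    (t : A →ₗ[R] R)
    (hodd : ∀ x ∈ 𝒜 1, t x = 0)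
    (htr : ∀ (i j : ZMod 2), ∀ x ∈ 𝒜 i, ∀ y ∈ 𝒜 j,
      t (x * y) = (-1 : R) ^ (i.val * j.val) * t (y * x))
    (hiso : Function.Bijective fun a : A => t ∘ₗ LinearMap.mulRight R a) :
    ∃ e : (Submodule.span R {x : A | ∃ i : ZMod 2, x ∈ 𝒜 i ∧
            ∀ (j : ZMod 2), ∀ y ∈ 𝒜 j, x * y = ((-1 : R) ^ (i.val * j.val)) • (y * x)}) ≃ₗ[R]
        Module.Dual R (A ⧸ Submodule.span R {u : A | ∃ (i j : ZMod 2) (x y : A),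
            x ∈ 𝒜 i ∧ y ∈ 𝒜 j ∧ u = x * y - ((-1 : R) ^ (i.val * j.val)) • (y * x)}),
      ∀ z a, e z (Submodule.Quotient.mk a) = t (a * (z : A)) := by
  have hbij : Function.Bijective (traceForm t) := hiso
  let Φ := LinearEquiv.ofBijective (traceForm t) hbij
  have hmap : (superCenter 𝒜).map (Φ : A →ₗ[R] Module.Dual R A) =
      (superCommutators 𝒜).dualAnnihilator := by
    rw [superCenter_eq_comap_dualAnnihilator hodd htr hbij.injective]
    exact Submodule.map_comap_eq_of_surjective hbij.surjective _
  exact ⟨Φ.submoduleMap (superCenter 𝒜) ≪≫ₗ LinearEquiv.ofEq _ _ hmap ≪≫ₗ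
    (Submodule.dualQuotEquivDualAnnihilator _).symm, fun z a => rfl⟩

/-- If a superalgebra `A` over an integral domain `R` of characteristic `≠ 2`
(finitely generated projective as an `R`-module) carries an even `R`-linear
form `t` vanishing on the odd part, which is a supertrace
(`t (x y) = (-1)^{|x||y|} t (y x)` for homogeneous `x, y`) and induces an
isomorphism `A ≅ Hom_R(A, R)` via `a ↦ t (- * a)`, then `z ↦ t (- * z)`
restricts to an isomorphism from the supercenter `SupZ(A)` onto the dual of the
supercocenter `A / [A, A]⁻`. -/
theorem supercenter_dual_of_supercocenter_of_supersymmetric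
    (R : Type*) [CommRing R] [IsDomain R] (hchar : (2 : R) ≠ 0)
    (A : Type*) [Ring A] [Algebra R A] [Module.Finite R A] [Module.Projective R A]
    (𝒜 : ZMod 2 → Submodule R A) [GradedAlgebra 𝒜]
    (t : A →ₗ[R] R)
    (hodd : ∀ x ∈ 𝒜 1, t x = 0)
    (htr : ∀ (i j : ZMod 2), ∀ x ∈ 𝒜 i, ∀ y ∈ 𝒜 j,
      t (x * y) = (-1 : R) ^ (i.val * j.val) * t (y * x))
    (hiso : Function.Bijective fun a : A => t ∘ₗ LinearMap.mulRight R a) :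
    ∃ e : (Submodule.span R {x : A | ∃ i : ZMod 2, x ∈ 𝒜 i ∧
            ∀ (j : ZMod 2), ∀ y ∈ 𝒜 j, x * y = ((-1 : R) ^ (i.val * j.val)) • (y * x)}) ≃ₗ[R]
        Module.Dual R (A ⧸ Submodule.span R {u : A | ∃ (i j : ZMod 2) (x y : A),
            x ∈ 𝒜 i ∧ y ∈ 𝒜 j ∧ u = x * y - ((-1 : R) ^ (i.val * j.val)) • (y * x)}),
      ∀ z a, e z (Submodule.Quotient.mk a) = t (a * (z : A)) :=
  supercenter_dual_of_supercocenter_of_supersymmetric_general R A 𝒜 t hodd htr hiso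
end

section
/- Let F be an algebraically closed field of characteristic ≠ 2 and Q_n ⊂ M_{n,n} the queer superalgebra consisting of block matrices [[A, B], [−B, A]] with A, B ∈ M_n(F), n ≥ 1. Then the even parts of Tr(Q_n) and Z(Q_n) are 1-dimensional over F, while the even part of SupTr(Q_n) is 0-dimensional. -/
/-- The parity of an index of the superspace `F^{n|n}`, modelled on `Fin n ⊕ Fin n`. -/
def superParity (n : ℕ) : Fin n ⊕ Fin n → ZMod 2 := Sum.elim (fun _ => 0) (fun _ => 1)

/-- The degree-`d` homogeneous component of the matrix superalgebra `M_{n,n}(F)`. -/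
def matGrade (F : Type*) [CommRing F] (n : ℕ) (d : ZMod 2) :
    Submodule F (Matrix (Fin n ⊕ Fin n) (Fin n ⊕ Fin n) F) where
  carrier := {M | ∀ i j, superParity n i + superParity n j ≠ d → M i j = 0}
  add_mem' := by
    intro a b ha hb i j h
    simp [Matrix.add_apply, ha i j h, hb i j h]
  zero_mem' := by intro i j _; rfl
  smul_mem' := by
    intro r M hM i j h
    simp [Matrix.smul_apply, hM i j h]

/-- The queer superalgebra `Q_n ⊆ M_{n,n}(F)`, consisting of the block matrices
`[[A, B], [-B, A]]`, as a submodule of the matrix superalgebra. -/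
def queer (F : Type*) [CommRing F] (n : ℕ) :
    Submodule F (Matrix (Fin n ⊕ Fin n) (Fin n ⊕ Fin n) F) where
  carrier := {M | (∀ i j : Fin n, M (Sum.inl i) (Sum.inl j) = M (Sum.inr i) (Sum.inr j)) ∧
    ∀ i j : Fin n, M (Sum.inl i) (Sum.inr j) = -M (Sum.inr i) (Sum.inl j)}
  add_mem' := by
    intro a b ha hb
    refine ⟨fun i j => ?_, fun i j => ?_⟩
    · simp [Matrix.add_apply, ha.1 i j, hb.1 i j]
    · simp only [Matrix.add_apply, ha.2 i j, hb.2 i j]; ring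
  zero_mem' := by
    refine ⟨fun i j => rfl, fun i j => ?_⟩
    simp [Matrix.zero_apply]
  smul_mem' := by
    intro r M hM
    refine ⟨fun i j => ?_, fun i j => ?_⟩
    · simp [Matrix.smul_apply, hM.1 i j]
    · simp [Matrix.smul_apply, hM.2 i j]

/-- The center of the queer superalgebra, as a submodule of `Q_n`. -/
def queerCenter (F : Type*) [CommRing F] (n : ℕ) : Submodule F (queer F n) where
  carrier := {q | ∀ p : queer F n,
    (q : Matrix (Fin n ⊕ Fin n) (Fin n ⊕ Fin n) F) * (p : Matrix (Fin n ⊕ Fin n) (Fin n ⊕ Fin n) F)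
      = (p : Matrix (Fin n ⊕ Fin n) (Fin n ⊕ Fin n) F) * q}
  add_mem' := by
    intro a b ha hb p
    push_cast
    simp [add_mul, mul_add, ha p, hb p]
  zero_mem' := by intro p; push_cast; simp
  smul_mem' := by
    intro r q hq p
    push_cast
    rw [Matrix.smul_mul, Matrix.mul_smul, hq p]

/-! Even elements of `Q_n` are the `diag(A, A)`. The trace of the upper-left block kills every
commutator of `Q_n`, while the commutators `[diag(X, X), diag(Y, Y)]` already give every
`diag(A, A)` with `tr A = 0`; so the even cocenter is spanned by the nonzero class of
`diag(E₁₁, E₁₁)`. An even central element commutes with every `diag(E_kl, E_kl)`, hence is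
scalar. For the odd elements `[[0, B], [-B, 0]]` the supercommutator is an anticommutator, and
`[[0, A], [-A, 0]]` anticommuted with `[[0, 1], [-1, 0]]` is `-2 diag(A, A)`: with `2` invertible
every even element is a supercommutator. -/

open Matrix Module Submodule

theorem Matrix.mem_of_trace_eq_zero_of_commutator_mem {R m : Type*} [CommRing R] [Fintype m]
    [DecidableEq m] {W : Submodule R (Matrix m m R)}
    (hW : ∀ X Y : Matrix m m R, X * Y - Y * X ∈ W)
    {A : Matrix m m R} (hA : A.trace = 0) : A ∈ W := by
  rcases isEmpty_or_nonempty m with _ | ⟨⟨z⟩⟩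
  · simp [Subsingleton.elim A 0]
  -- `E_ij = [E_ij, E_jj]` for `i ≠ j`, and `E_ii - E_zz = [E_iz, E_zi]`.
  have hsingle : ∀ i j c, W.mkQ (single i j c) = if i = j then W.mkQ (single z z c) else 0 := by
    intro i j c
    split_ifs with hij
    · subst hij
      rw [← sub_eq_zero, ← map_sub, mkQ_apply, Quotient.mk_eq_zero]
      simpa using hW (single i z c) (single z i 1)
    · rw [mkQ_apply, Quotient.mk_eq_zero]
      simpa [Matrix.single_mul_single_of_ne _ _ _ _ (Ne.symm hij)] using
        hW (single i j c) (single j j 1)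
  have hsum : ∑ i, ∑ j, single i j (A i j) = A := (matrix_eq_sum_single A).symm
  rw [← Quotient.mk_eq_zero, ← mkQ_apply, ← hsum]
  simp only [map_sum]
  rw [Finset.sum_congr rfl fun i _ => Finset.sum_congr rfl fun j _ => hsingle i j (A i j)]
  simp only [Finset.sum_ite_eq, Finset.mem_univ, if_true]
  have htrace : ∑ i, single z z (A i i) = single z z A.trace :=
    (map_sum (singleAddMonoidHom (α := R) z z) _ _).symm
  rw [← map_sum, htrace, hA, single_zero, map_zero]

theorem Submodule.finrank_map_mkQ_eq_one {K M : Type*} [Field K] [AddCommGroup M] [Module K M]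
    {S V : Submodule K M} (f : M →ₗ[K] K) (hS : S ≤ LinearMap.ker f) {e : M} (he : e ∈ V)
    (hfe : f e = 1) (hV : ∀ x ∈ V, x - f x • e ∈ S) : finrank K (V.map S.mkQ) = 1 := by
  have hspan : V.map S.mkQ = K ∙ S.mkQ e := by
    refine le_antisymm ?_ (span_le.2 (Set.singleton_subset_iff.2 (mem_map_of_mem he)))
    rintro _ ⟨x, hx, rfl⟩
    refine mem_span_singleton.2 ⟨f x, ?_⟩
    rw [← map_smul, eq_comm, ← sub_eq_zero, ← map_sub, mkQ_apply, Quotient.mk_eq_zero]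
    exact hV x hx
  rw [hspan, finrank_span_singleton]
  intro h
  rw [mkQ_apply, Quotient.mk_eq_zero] at h
  simpa [hfe] using hS h

section Queer

variable {R : Type*} [CommRing R] {n : ℕ}

def queerEven :
    Matrix (Fin n) (Fin n) R →ₐ[R] Matrix (Fin n ⊕ Fin n) (Fin n ⊕ Fin n) R where
  toFun A := fromBlocks A 0 0 A
  map_one' := fromBlocks_one
  map_mul' A B := by simp [fromBlocks_multiply]
  map_zero' := fromBlocks_zero
  map_add' A B := by simp [fromBlocks_add]
  commutes' r := by simp [algebraMap_eq_diagonal, fromBlocks_diagonal]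

theorem queerEven_apply (A : Matrix (Fin n) (Fin n) R) : queerEven A = fromBlocks A 0 0 A :=
  rfl

def queerOdd (B : Matrix (Fin n) (Fin n) R) : Matrix (Fin n ⊕ Fin n) (Fin n ⊕ Fin n) R :=
  fromBlocks 0 B (-B) 0

theorem fromBlocks_mem_queer (A B : Matrix (Fin n) (Fin n) R) :
    fromBlocks A B (-B) A ∈ queer R n :=
  ⟨fun i j => rfl, fun i j => by simp⟩

theorem queerEven_mem_queer (A : Matrix (Fin n) (Fin n) R) : queerEven A ∈ queer R n := by
  simpa [queerEven_apply] using fromBlocks_mem_queer A 0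

theorem queerOdd_mem_queer (B : Matrix (Fin n) (Fin n) R) : queerOdd B ∈ queer R n :=
  fromBlocks_mem_queer 0 B

theorem queerEven_mem_matGrade_zero (A : Matrix (Fin n) (Fin n) R) :
    queerEven A ∈ matGrade R n 0 := by
  rintro (i | i) (j | j) h <;> first | exact absurd rfl h | rfl

theorem queerOdd_mem_matGrade_one (B : Matrix (Fin n) (Fin n) R) :
    queerOdd B ∈ matGrade R n 1 := by
  rintro (i | i) (j | j) h <;> first | exact absurd rfl h | rfl

theorem queerOdd_mul_queerOdd (A B : Matrix (Fin n) (Fin n) R) :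
    queerOdd A * queerOdd B = -queerEven (A * B) := by
  simp [queerOdd, queerEven_apply, fromBlocks_multiply, fromBlocks_neg]

theorem eq_fromBlocks_of_mem_queer {p : Matrix (Fin n ⊕ Fin n) (Fin n ⊕ Fin n) R}
    (hp : p ∈ queer R n) :
    p = fromBlocks p.toBlocks₁₁ p.toBlocks₁₂ (-p.toBlocks₁₂) p.toBlocks₁₁ := by
  ext (i | i) (j | j)
  · rfl
  · rfl
  · simp [toBlocks₁₂, hp.2 i j]
  · simp [toBlocks₁₁, hp.1 i j]

theorem queerEven_injective :
    Function.Injective (queerEven : Matrix (Fin n) (Fin n) R →ₐ[R] _) :=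
  fun _ _ h => (fromBlocks_inj.1 h).1

theorem one_mem_queer : (1 : Matrix (Fin n ⊕ Fin n) (Fin n ⊕ Fin n) R) ∈ queer R n := by
  simpa using queerEven_mem_queer (1 : Matrix (Fin n) (Fin n) R)

variable (R n) in
def queerEvenPart : Submodule R (queer R n) :=
  (matGrade R n 0).comap (queer R n).subtype

variable (R n) in
def queerCommutators : Submodule R (Matrix (Fin n ⊕ Fin n) (Fin n ⊕ Fin n) R) :=
  span R {u | ∃ p q, p ∈ queer R n ∧ q ∈ queer R n ∧ u = p * q - q * p}

variable (R n) in
def queerSupercommutators : Submodule R (Matrix (Fin n ⊕ Fin n) (Fin n ⊕ Fin n) R) :=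
  span R {u | ∃ (i j : ZMod 2) (p q : Matrix (Fin n ⊕ Fin n) (Fin n ⊕ Fin n) R),
    p ∈ queer R n ⊓ matGrade R n i ∧ q ∈ queer R n ⊓ matGrade R n j ∧
    u = p * q - ((-1 : R) ^ (i.val * j.val)) • (q * p)}

theorem exists_eq_queerEven_of_mem_queerEvenPart {x : queer R n} (hx : x ∈ queerEvenPart R n) :
    ∃ A, (x : Matrix (Fin n ⊕ Fin n) (Fin n ⊕ Fin n) R) = queerEven A := by
  have hB : x.1.toBlocks₁₂ = 0 := by
    ext i j
    exact hx (Sum.inl i) (Sum.inr j) one_ne_zero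
  refine ⟨x.1.toBlocks₁₁, ?_⟩
  rw [eq_fromBlocks_of_mem_queer x.2, hB, neg_zero]
  rfl

variable (R n) in
def queerTrace : Matrix (Fin n ⊕ Fin n) (Fin n ⊕ Fin n) R →ₗ[R] R where
  toFun M := M.toBlocks₁₁.trace
  map_add' M N := by simp [toBlocks₁₁, trace, Finset.sum_add_distrib]
  map_smul' r M := by simp [toBlocks₁₁, trace, Finset.mul_sum]

theorem queerTrace_fromBlocks (A B C D : Matrix (Fin n) (Fin n) R) :
    queerTrace R n (fromBlocks A B C D) = A.trace :=
  rfl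

theorem queerTrace_commutator {p q : Matrix (Fin n ⊕ Fin n) (Fin n ⊕ Fin n) R}
    (hp : p ∈ queer R n) (hq : q ∈ queer R n) : queerTrace R n (p * q - q * p) = 0 := by
  rw [eq_fromBlocks_of_mem_queer hp, eq_fromBlocks_of_mem_queer hq]
  simp [fromBlocks_multiply, queerTrace_fromBlocks, trace_mul_comm p.toBlocks₁₁,
    trace_mul_comm p.toBlocks₁₂]

theorem queerTrace_queerEven (A : Matrix (Fin n) (Fin n) R) :
    queerTrace R n (queerEven A) = A.trace :=
  rfl

theorem queerCommutators_le_ker_queerTrace :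
    queerCommutators R n ≤ LinearMap.ker (queerTrace R n) :=
  span_le.2 fun _ ⟨_, _, hp, hq, hu⟩ => hu ▸ queerTrace_commutator hp hq

theorem queerEven_mem_queerCommutators_of_trace_eq_zero {A : Matrix (Fin n) (Fin n) R}
    (hA : A.trace = 0) : queerEven A ∈ queerCommutators R n :=
  mem_of_trace_eq_zero_of_commutator_mem (W := (queerCommutators R n).comap queerEven.toLinearMap)
    (fun X Y => subset_span ⟨_, _, queerEven_mem_queer X, queerEven_mem_queer Y, by simp⟩) hA

theorem finrank_queerEvenPart_map_mkQ_queerCommutators {F : Type*} [Field F] [NeZero n] :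
    finrank F ((queerEvenPart F n).map
      ((queerCommutators F n).comap (queer F n).subtype).mkQ) = 1 := by
  let z : Fin n := 0
  refine finrank_map_mkQ_eq_one ((queerTrace F n).comp (queer F n).subtype)
    (fun x hx => queerCommutators_le_ker_queerTrace hx)
    (e := ⟨queerEven (single z z 1), queerEven_mem_queer _⟩) (queerEven_mem_matGrade_zero _)
    (trace_single_eq_same z 1) fun x hx => ?_
  obtain ⟨A, hA⟩ := exists_eq_queerEven_of_mem_queerEvenPart hx
  rw [mem_comap, map_sub, map_smul, LinearMap.comp_apply, subtype_apply, subtype_apply, hA,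
    queerTrace_queerEven, ← map_smul, ← map_sub]
  exact queerEven_mem_queerCommutators_of_trace_eq_zero (by simp)

theorem queerCenter_inf_queerEvenPart :
    queerCenter R n ⊓ queerEvenPart R n = R ∙ ⟨1, one_mem_queer⟩ := by
  refine le_antisymm ?_ (span_le.2 (Set.singleton_subset_iff.2 ⟨fun p => by simp, ?_⟩))
  · rintro x ⟨hc, hg⟩
    obtain ⟨A, hx⟩ := exists_eq_queerEven_of_mem_queerEvenPart hg
    have hcomm : Pairwise fun k l => Commute (single k l 1) A := fun k l _ => by
      apply queerEven_injective
      have := hc ⟨queerEven (single k l 1), queerEven_mem_queer _⟩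
      rw [hx] at this
      simpa [← map_mul] using this.symm
    obtain ⟨r, hr⟩ := mem_range_scalar_of_commute_single hcomm
    refine mem_span_singleton.2 ⟨r, Subtype.ext ?_⟩
    rw [coe_smul, hx, ← hr, scalar_apply, ← smul_one_eq_diagonal, map_smul, map_one]
  · change (1 : Matrix (Fin n ⊕ Fin n) (Fin n ⊕ Fin n) R) ∈ matGrade R n 0
    simpa using queerEven_mem_matGrade_zero (1 : Matrix (Fin n) (Fin n) R)

theorem queerEven_mem_queerSupercommutators (h2 : IsUnit (2 : R))
    (A : Matrix (Fin n) (Fin n) R) :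
    queerEven A ∈ queerSupercommutators R n := by
  have hgen : queerOdd A * queerOdd 1 - ((-1 : R) ^ ((1 : ZMod 2).val * (1 : ZMod 2).val)) •
      (queerOdd 1 * queerOdd A) ∈ queerSupercommutators R n :=
    subset_span ⟨1, 1, _, _, ⟨queerOdd_mem_queer A, queerOdd_mem_matGrade_one A⟩,
      ⟨queerOdd_mem_queer 1, queerOdd_mem_matGrade_one 1⟩, rfl⟩
  have hu : queerOdd A * queerOdd 1 - ((-1 : R) ^ ((1 : ZMod 2).val * (1 : ZMod 2).val)) •
      (queerOdd 1 * queerOdd A) = -(2 : R) • queerEven A := by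
    rw [queerOdd_mul_queerOdd, queerOdd_mul_queerOdd, mul_one, one_mul,
      show (1 : ZMod 2).val * (1 : ZMod 2).val = 1 from rfl, pow_one]
    module
  have := (queerSupercommutators R n).smul_mem (-↑h2.unit⁻¹) (hu ▸ hgen)
  rwa [smul_smul, neg_mul_neg, h2.val_inv_mul, one_smul] at this

theorem queerEvenPart_map_mkQ_queerSupercommutators (h2 : IsUnit (2 : R)) :
    (queerEvenPart R n).map ((queerSupercommutators R n).comap (queer R n).subtype).mkQ = ⊥ := by
  rw [eq_bot_iff, map_le_iff_le_comap, comap_bot, ker_mkQ]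
  intro x hx
  obtain ⟨A, hA⟩ := exists_eq_queerEven_of_mem_queerEvenPart hx
  rw [mem_comap, subtype_apply, hA]
  exact queerEven_mem_queerSupercommutators h2 A

theorem finrank_queerCenter_inf_queerEvenPart {F : Type*} [Field F] [NeZero n] :
    finrank F (queerCenter F n ⊓ queerEvenPart F n : Submodule F (queer F n)) = 1 := by
  rw [queerCenter_inf_queerEvenPart]
  exact finrank_span_singleton fun h => one_ne_zero (congrArg Subtype.val h)

theorem finrank_queerEvenPart_map_mkQ_queerSupercommutators {F : Type*} [Field F]
    (h2 : (2 : F) ≠ 0) :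
    finrank F ((queerEvenPart F n).map
      ((queerSupercommutators F n).comap (queer F n).subtype).mkQ) = 0 := by
  rw [queerEvenPart_map_mkQ_queerSupercommutators h2.isUnit, finrank_bot]

end Queer

theorem queer_superalgebra_cocenter_center_supercocenter_dims_general
    (F : Type*) [Field F] (hchar : (2 : F) ≠ 0)
    (n : ℕ) (hn : 1 ≤ n) :
    Module.finrank F
        (((matGrade F n 0).comap (queer F n).subtype).map
          ((Submodule.span F {u : Matrix (Fin n ⊕ Fin n) (Fin n ⊕ Fin n) F |
              ∃ p q, p ∈ queer F n ∧ q ∈ queer F n ∧ u = p * q - q * p}).comap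
            (queer F n).subtype).mkQ) = 1 ∧
    Module.finrank F
        (queerCenter F n ⊓ (matGrade F n 0).comap (queer F n).subtype :
          Submodule F (queer F n)) = 1 ∧
    Module.finrank F
        (((matGrade F n 0).comap (queer F n).subtype).map
          ((Submodule.span F {u : Matrix (Fin n ⊕ Fin n) (Fin n ⊕ Fin n) F |
              ∃ (i j : ZMod 2) (p q : Matrix (Fin n ⊕ Fin n) (Fin n ⊕ Fin n) F),
                p ∈ queer F n ⊓ matGrade F n i ∧ q ∈ queer F n ⊓ matGrade F n j ∧
                u = p * q - ((-1 : F) ^ (i.val * j.val)) • (q * p)}).comap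
            (queer F n).subtype).mkQ) = 0 := by
  have : NeZero n := ⟨by omega⟩
  exact ⟨finrank_queerEvenPart_map_mkQ_queerCommutators, finrank_queerCenter_inf_queerEvenPart,
    finrank_queerEvenPart_map_mkQ_queerSupercommutators hchar⟩

/-- For the queer superalgebra `Q_n` (`n ≥ 1`) over an algebraically closed field of
characteristic `≠ 2`, the even parts of the cocenter `Tr(Q_n)` and of the center
`Z(Q_n)` are `1`-dimensional, while the even part of the supercocenter
`SupTr(Q_n)` is `0`-dimensional. -/
theorem queer_superalgebra_cocenter_center_supercocenter_dims
    (F : Type*) [Field F] [IsAlgClosed F] (hchar : (2 : F) ≠ 0)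
    (n : ℕ) (hn : 1 ≤ n) :
    Module.finrank F
        (((matGrade F n 0).comap (queer F n).subtype).map
          ((Submodule.span F {u : Matrix (Fin n ⊕ Fin n) (Fin n ⊕ Fin n) F |
              ∃ p q, p ∈ queer F n ∧ q ∈ queer F n ∧ u = p * q - q * p}).comap
            (queer F n).subtype).mkQ) = 1 ∧
    Module.finrank F
        (queerCenter F n ⊓ (matGrade F n 0).comap (queer F n).subtype :
          Submodule F (queer F n)) = 1 ∧
    Module.finrank F
        (((matGrade F n 0).comap (queer F n).subtype).map
          ((Submodule.span F {u : Matrix (Fin n ⊕ Fin n) (Fin n ⊕ Fin n) F |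
              ∃ (i j : ZMod 2) (p q : Matrix (Fin n ⊕ Fin n) (Fin n ⊕ Fin n) F),
                p ∈ queer F n ⊓ matGrade F n i ∧ q ∈ queer F n ⊓ matGrade F n j ∧
                u = p * q - ((-1 : F) ^ (i.val * j.val)) • (q * p)}).comap
            (queer F n).subtype).mkQ) = 0 :=
  queer_superalgebra_cocenter_center_supercocenter_dims_general F hchar n hn
end

section
/- In the algebra (A_n^g)' generated by even elements s_0, s_1, …, s_{n−1} and odd elements c_1, …, c_n subject to s_i² = 1 (i ≥ 1), g(s_0) = 0, the braid relations among s_1,…,s_{n−1}, the relation s_1 s_0 s_1 s_0 − s_0 s_1 s_0 s_1 = s_0(1 + c_1 c_2) s_1 − (1 + c_1 c_2) s_1 s_0, Clifford relations for the c_i, s_i c_i = c_{i+1} s_i, s_i c_{i+1} = c_i s_i, s_i c_j = c_j s_i (j ≠ i, i+1), s_0 c_1 = −c_1 s_0, s_0 c_j = c_j s_0 (j ≥ 2), the following identity holds for all a, b ∈ ℕ: s_1 s_0^a s_1 s_0^b − s_0^b s_1 s_0^a s_1 = Σ_{i=1}^{b} ( s_0^{a+b−i}(1 + (−1)^{a−1}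 c_1 c_2) s_1 s_0^{i−1} − s_0^{i−1}(1 + (−1)^{a−1} c_1 c_2) s_1 s_0^{a+b−i} ). -/
/-! Write `s = s₁`, `t = s₀`, `e = c₁ c₂`. The weak braid relation says exactly that
`s t s + (1 + e) s` commutes with `t`, hence with `t^a`. Conjugating the resulting identity by
`s`, and moving `e` past `t^a` (they anticommute), gives the case `b = 1`:
`[s t^a s, t] = t^a E s - E s t^a` with `E = 1 - (-1)^a e`. The general case follows by
expanding `[x, t^b] = ∑ t^j [x, t] t^(b-1-j)` and reindexing. -/

/-- Generators of the new presentation of the cyclotomic Sergeev algebra: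
`t` is the order-`g` generator `s₀`, `s i` the transposition of strands
`i, i+1` (0-based), and `c i` the Clifford generators. -/
inductive TGen : Type
  | t : TGen
  | s : ℕ → TGen
  | c : ℕ → TGen

open FreeAlgebra in
/-- The relations of the new presentation `(H_n^g)'` of the cyclotomic Sergeev
algebra on `n` strands. -/
inductive TRel (R : Type) [CommRing R] (n : ℕ) (g : Polynomial R) :
    FreeAlgebra R TGen → FreeAlgebra R TGen → Prop
  | tInv (h : n = 0) : TRel R n g (ι R TGen.t) 0
  | sInv (i : ℕ) (h : n ≤ i + 1) : TRel R n g (ι R (TGen.s i)) 0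
  | cInv (i : ℕ) (h : n ≤ i) : TRel R n g (ι R (TGen.c i)) 0
  | sSq (i : ℕ) (h : i + 1 < n) : TRel R n g (ι R (TGen.s i) * ι R (TGen.s i)) 1
  | tPoly (h : 0 < n) : TRel R n g (Polynomial.aeval (ι R TGen.t) g) 0
  | sComm (i j : ℕ) (hij : i + 1 < j) (hj : j + 1 < n) :
      TRel R n g (ι R (TGen.s i) * ι R (TGen.s j)) (ι R (TGen.s j) * ι R (TGen.s i))
  | sBraid (i : ℕ) (h : i + 2 < n) :
      TRel R n g (ι R (TGen.s i) * ι R (TGen.s (i+1)) * ι R (TGen.s i))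
        (ι R (TGen.s (i+1)) * ι R (TGen.s i) * ι R (TGen.s (i+1)))
  | tsComm (i : ℕ) (h1 : 1 ≤ i) (h2 : i + 1 < n) :
      TRel R n g (ι R TGen.t * ι R (TGen.s i)) (ι R (TGen.s i) * ι R TGen.t)
  | weakBraid (h : 2 ≤ n) :
      TRel R n g
        (ι R (TGen.s 0) * ι R TGen.t * ι R (TGen.s 0) * ι R TGen.t -
          ι R TGen.t * ι R (TGen.s 0) * ι R TGen.t * ι R (TGen.s 0))
        (ι R TGen.t * (1 + ι R (TGen.c 0) * ι R (TGen.c 1)) * ι R (TGen.s 0) -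
          (1 + ι R (TGen.c 0) * ι R (TGen.c 1)) * ι R (TGen.s 0) * ι R TGen.t)
  | cSq (i : ℕ) (h : i < n) : TRel R n g (ι R (TGen.c i) * ι R (TGen.c i)) 1
  | cAnti (i j : ℕ) (h : i ≠ j) :
      TRel R n g (ι R (TGen.c i) * ι R (TGen.c j)) (-(ι R (TGen.c j) * ι R (TGen.c i)))
  | scLeft (i : ℕ) (h : i + 1 < n) :
      TRel R n g (ι R (TGen.s i) * ι R (TGen.c i)) (ι R (TGen.c (i+1)) * ι R (TGen.s i))
  | scRight (i : ℕ) (h : i + 1 < n) :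
      TRel R n g (ι R (TGen.s i) * ι R (TGen.c (i+1))) (ι R (TGen.c i) * ι R (TGen.s i))
  | scOther (i j : ℕ) (h1 : j ≠ i) (h2 : j ≠ i + 1) :
      TRel R n g (ι R (TGen.s i) * ι R (TGen.c j)) (ι R (TGen.c j) * ι R (TGen.s i))
  | tc (h : 0 < n) :
      TRel R n g (ι R TGen.t * ι R (TGen.c 0)) (-(ι R (TGen.c 0) * ι R TGen.t))
  | tcOther (j : ℕ) (h : 1 ≤ j) :
      TRel R n g (ι R TGen.t * ι R (TGen.c j)) (ι R (TGen.c j) * ι R TGen.t)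

/-- The new presentation `(H_n^g)'` of the cyclotomic Sergeev algebra. -/
abbrev SergeevP (R : Type) [CommRing R] (n : ℕ) (g : Polynomial R) : Type :=
  RingQuot (TRel R n g)

namespace SergeevP

variable (R : Type) [CommRing R] (n : ℕ) (g : Polynomial R)

/-- The generator `s₀` (denoted `t`). -/
noncomputable def T : SergeevP R n g :=
  RingQuot.mkAlgHom R (TRel R n g) (FreeAlgebra.ι R TGen.t)

/-- The generator `s i` (0-based: the paper's `s_{i+1}`). -/
noncomputable def S (i : ℕ) : SergeevP R n g :=
  RingQuot.mkAlgHom R (TRel R n g) (FreeAlgebra.ι R (TGen.s i))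

/-- The generator `c i` (0-based: the paper's `c_{i+1}`). -/
noncomputable def C (i : ℕ) : SergeevP R n g :=
  RingQuot.mkAlgHom R (TRel R n g) (FreeAlgebra.ι R (TGen.c i))

end SergeevP

open Finset

section WeakBraid

variable {A : Type*} [Ring A]

theorem mul_pow_sub_pow_mul_eq_sum (x t : A) (b : ℕ) :
    x * t ^ b - t ^ b * x = ∑ j ∈ range b, t ^ j * (x * t - t * x) * t ^ (b - 1 - j) := by
  induction b with
  | zero => simp
  | succ b ih =>
    have hshift : ∑ j ∈ range b, t ^ j * (x * t - t * x) * t ^ (b + 1 - 1 - j) =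
        (∑ j ∈ range b, t ^ j * (x * t - t * x) * t ^ (b - 1 - j)) * t := by
      rw [sum_mul]
      refine sum_congr rfl fun j hj => ?_
      have hj : j < b := mem_range.mp hj
      rw [show b + 1 - 1 - j = b - 1 - j + 1 by omega, pow_succ]
      simp only [mul_assoc]
    rw [sum_range_succ, hshift, ← ih, show b + 1 - 1 - b = 0 by omega, pow_zero, mul_one,
      pow_succ]
    noncomm_ring

theorem mul_pow_sub_pow_mul_of_commutator_eq {x t y : A} {a : ℕ}
    (h : x * t - t * x = t ^ a * y - y * t ^ a) (b : ℕ) :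
    x * t ^ b - t ^ b * x =
      ∑ i ∈ Icc 1 b, (t ^ (a + b - i) * y * t ^ (i - 1) - t ^ (i - 1) * y * t ^ (a + b - i)) := by
  rw [mul_pow_sub_pow_mul_eq_sum, h, ← Ico_add_one_right_eq_Icc, sum_Ico_eq_sum_range,
    Nat.add_sub_cancel]
  simp only [mul_sub, sub_mul, sum_sub_distrib]
  congr 1
  · rw [← sum_range_reflect]
    refine sum_congr rfl fun j hj => ?_
    have hj : j < b := mem_range.mp hj
    rw [show a + b - (1 + j) = b - 1 - j + a by omega,
      show 1 + j - 1 = b - 1 - (b - 1 - j) by omega, pow_add]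
    noncomm_ring
  · refine sum_congr rfl fun j hj => ?_
    have hj : j < b := mem_range.mp hj
    rw [show a + b - (1 + j) = a + (b - 1 - j) by omega, Nat.add_sub_cancel_left, pow_add]
    noncomm_ring

theorem mul_pow_sub_pow_mul_of_commute_add {x y t : A} (h : Commute (x + y) t) (a : ℕ) :
    x * t ^ a - t ^ a * x = t ^ a * y - y * t ^ a := by
  have h' := (h.pow_right a).eq
  rw [add_mul, mul_add] at h'
  rw [sub_eq_sub_iff_add_eq_add, h', add_comm]

theorem mul_pow_of_mul_eq_neg {t e : A} (h : t * e = -(e * t)) (k : ℕ) :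
    e * t ^ k = t ^ k * ((-1) ^ k * e) := by
  have hsemi : SemiconjBy e t (-t) := by
    rw [SemiconjBy, neg_mul, h, neg_neg]
  rw [(hsemi.pow_right k).eq, neg_pow, ((Commute.neg_one_left (t ^ k)).pow_left k).eq,
    mul_assoc]

theorem pow_mul_of_mul_eq_neg {t e : A} (h : t * e = -(e * t)) (k : ℕ) :
    t ^ k * e = (-1) ^ k * e * t ^ k := by
  have hsemi : SemiconjBy e (-t) t := by
    rw [SemiconjBy, mul_neg, h]
  rw [← (hsemi.pow_right k).eq, neg_pow, ← mul_assoc, ((Commute.neg_one_left e).pow_left k).eq]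

theorem weak_braid_pow_one {s t e : A} (hs : s * s = 1) (hte : t * e = -(e * t))
    (hse : s * e = -(e * s))
    (hwb : s * t * s * t - t * s * t * s = t * (1 + e) * s - (1 + e) * s * t) (a : ℕ) :
    s * t ^ a * s * t - t * s * t ^ a * s =
      t ^ a * (1 - (-1) ^ a * e) * s - (1 - (-1) ^ a * e) * s * t ^ a := by
  have hcomm : Commute (s * t * s + (1 + e) * s) t := by
    rw [commute_iff_eq, ← sub_eq_zero]
    calc (s * t * s + (1 + e) * s) * t - t * (s * t * s + (1 + e) * s)
        = (s * t * s * t - t * s * t * s) - (t * (1 + e) * s - (1 + e) * s * t) := by noncomm_ring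
      _ = 0 := by rw [hwb, sub_self]
  have hpow := mul_pow_sub_pow_mul_of_commute_add hcomm a
  have hconj : s * (1 + e) * s = 1 - e := by
    rw [mul_add, mul_one, hse, add_mul, hs, neg_mul, mul_assoc, hs, mul_one, sub_eq_add_neg]
  have hsign : Commute s ((-1) ^ a) := (Commute.neg_one_right s).pow_right a
  calc s * t ^ a * s * t - t * s * t ^ a * s
      = -(s * (s * t * s * t ^ a - t ^ a * (s * t * s)) * s) + s * t ^ a * s * t * (1 - s * s)
          - (1 - s * s) * (t * s * t ^ a * s) := by noncomm_ring
    _ = -(s * (t ^ a * ((1 + e) * s) - (1 + e) * s * t ^ a) * s) := by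
        rw [hpow, hs]; noncomm_ring
    _ = s * (1 + e) * s * t ^ a * s - s * t ^ a * (1 + e) * (s * s) := by noncomm_ring
    _ = t ^ a * s - e * t ^ a * s - s * t ^ a - s * (t ^ a * e) := by
        rw [hs, mul_one, hconj]; noncomm_ring
    _ = t ^ a * s - t ^ a * ((-1) ^ a * e) * s - s * t ^ a - s * (-1) ^ a * e * t ^ a := by
        rw [mul_pow_of_mul_eq_neg hte, pow_mul_of_mul_eq_neg hte]; noncomm_ring
    _ = t ^ a * (1 - (-1) ^ a * e) * s - (1 - (-1) ^ a * e) * s * t ^ a := by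
        rw [hsign.eq, mul_assoc _ s e, hse]; noncomm_ring

theorem weak_braid_pow {s t e : A} (hs : s * s = 1) (hte : t * e = -(e * t))
    (hse : s * e = -(e * s))
    (hwb : s * t * s * t - t * s * t * s = t * (1 + e) * s - (1 + e) * s * t) (a b : ℕ) :
    s * t ^ a * s * t ^ b - t ^ b * s * t ^ a * s =
      ∑ i ∈ Icc 1 b, (t ^ (a + b - i) * (1 - (-1) ^ a * e) * s * t ^ (i - 1) -
        t ^ (i - 1) * (1 - (-1) ^ a * e) * s * t ^ (a + b - i)) := by
  have hone : (s * t ^ a * s) * t - t * (s * t ^ a * s) =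
      t ^ a * ((1 - (-1) ^ a * e) * s) - ((1 - (-1) ^ a * e) * s) * t ^ a := by
    simpa only [mul_assoc] using weak_braid_pow_one hs hte hse hwb a
  simpa only [mul_assoc] using mul_pow_sub_pow_mul_of_commutator_eq hone b

end WeakBraid

namespace SergeevP

variable {R : Type} [CommRing R] {n : ℕ} {g : Polynomial R}

theorem S_eq_zero {i : ℕ} (h : n ≤ i + 1) : S R n g i = 0 := by
  simpa only [S, map_zero] using RingQuot.mkAlgHom_rel R (TRel.sInv (g := g) i h)

theorem S_mul_self {i : ℕ} (h : i + 1 < n) : S R n g i * S R n g i = 1 := by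
  simpa only [S, map_mul, map_one] using RingQuot.mkAlgHom_rel R (TRel.sSq (g := g) i h)

theorem C_mul_C_of_ne {i j : ℕ} (h : i ≠ j) :
    C R n g i * C R n g j = -(C R n g j * C R n g i) := by
  simpa only [C, map_mul, map_neg] using
    RingQuot.mkAlgHom_rel R (TRel.cAnti (n := n) (g := g) i j h)

theorem S_mul_C_self {i : ℕ} (h : i + 1 < n) :
    S R n g i * C R n g i = C R n g (i + 1) * S R n g i := by
  simpa only [S, C, map_mul] using RingQuot.mkAlgHom_rel R (TRel.scLeft (g := g) i h)

theorem S_mul_C_succ {i : ℕ} (h : i + 1 < n) :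
    S R n g i * C R n g (i + 1) = C R n g i * S R n g i := by
  simpa only [S, C, map_mul] using RingQuot.mkAlgHom_rel R (TRel.scRight (g := g) i h)

theorem T_mul_C_zero (h : 0 < n) : T R n g * C R n g 0 = -(C R n g 0 * T R n g) := by
  simpa only [T, C, map_mul, map_neg] using RingQuot.mkAlgHom_rel R (TRel.tc (g := g) h)

theorem T_mul_C_of_pos {j : ℕ} (h : 1 ≤ j) : T R n g * C R n g j = C R n g j * T R n g := by
  simpa only [T, C, map_mul] using RingQuot.mkAlgHom_rel R (TRel.tcOther (n := n) (g := g) j h)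

theorem weak_braid (h : 2 ≤ n) :
    S R n g 0 * T R n g * S R n g 0 * T R n g - T R n g * S R n g 0 * T R n g * S R n g 0 =
      T R n g * (1 + C R n g 0 * C R n g 1) * S R n g 0 -
        (1 + C R n g 0 * C R n g 1) * S R n g 0 * T R n g := by
  simpa only [S, T, C, map_sub, map_mul, map_add, map_one] using
    RingQuot.mkAlgHom_rel R (TRel.weakBraid (g := g) h)

theorem T_mul_C_zero_mul_C {j : ℕ} (hn : 0 < n) (hj : 1 ≤ j) :
    T R n g * (C R n g 0 * C R n g j) = -(C R n g 0 * C R n g j * T R n g) := by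
  rw [← mul_assoc, T_mul_C_zero hn, neg_mul (C R n g 0 * T R n g), mul_assoc, T_mul_C_of_pos hj,
    mul_assoc]

theorem S_mul_C_mul_C_succ {i : ℕ} (h : i + 1 < n) :
    S R n g i * (C R n g i * C R n g (i + 1)) = -(C R n g i * C R n g (i + 1) * S R n g i) := by
  rw [← mul_assoc, S_mul_C_self h, mul_assoc, S_mul_C_succ h, ← mul_assoc,
    C_mul_C_of_ne (Nat.succ_ne_self i), neg_mul (C R n g i * C R n g (i + 1))]

end SergeevP

open SergeevP in
theorem weak_braid_power_identity_general
    (R : Type) [CommRing R]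
    (n : ℕ) (g : Polynomial R)
    (a b : ℕ) (ha : 1 ≤ a) :
    S R n g 0 * T R n g ^ a * S R n g 0 * T R n g ^ b -
        T R n g ^ b * S R n g 0 * T R n g ^ a * S R n g 0 =
      ∑ i ∈ Finset.Icc 1 b,
        (T R n g ^ (a + b - i) *
            (1 + (-1 : SergeevP R n g) ^ (a - 1) * (C R n g 0 * C R n g 1)) *
            S R n g 0 * T R n g ^ (i - 1) -
          T R n g ^ (i - 1) *
            (1 + (-1 : SergeevP R n g) ^ (a - 1) * (C R n g 0 * C R n g 1)) *
            S R n g 0 * T R n g ^ (a + b - i)) := by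
  rcases lt_or_ge n 2 with hn | hn
  · rw [S_eq_zero (by omega)]
    simp
  have hsign : 1 + (-1 : SergeevP R n g) ^ (a - 1) * (C R n g 0 * C R n g 1) =
      1 - (-1) ^ a * (C R n g 0 * C R n g 1) := by
    obtain ⟨k, rfl⟩ := Nat.exists_eq_add_of_le' ha
    rw [Nat.add_sub_cancel, pow_succ, mul_neg_one ((-1 : SergeevP R n g) ^ k),
      neg_mul ((-1 : SergeevP R n g) ^ k), sub_neg_eq_add]
  rw [hsign]
  exact weak_braid_pow (S_mul_self hn) (T_mul_C_zero_mul_C (by omega) le_rfl)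
    (S_mul_C_mul_C_succ hn) (weak_braid hn) a b

open SergeevP in
/-- In the new presentation `(H_n^g)'` of the cyclotomic Sergeev algebra (with
`s₀` denoted `T`, and the paper's `s₁, c₁, c₂` being `S 0, C 0, C 1`), for all
`a ≥ 1` and all `b`:
`s₁ s₀^a s₁ s₀^b - s₀^b s₁ s₀^a s₁ =
  ∑_{i=1}^{b} ( s₀^{a+b-i}(1 + (-1)^{a-1} c₁ c₂) s₁ s₀^{i-1}
              - s₀^{i-1}(1 + (-1)^{a-1} c₁ c₂) s₁ s₀^{a+b-i} )`. -/
theorem weak_braid_power_identity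
    (R : Type) [CommRing R] [IsDomain R] (h2 : IsUnit (2 : R))
    (n d : ℕ) (g : Polynomial R) (hmon : g.Monic) (hdeg : g.natDegree = d)
    (hpar : ∀ k : ℕ, k % 2 ≠ d % 2 → g.coeff k = 0)
    (a b : ℕ) (ha : 1 ≤ a) :
    S R n g 0 * T R n g ^ a * S R n g 0 * T R n g ^ b -
        T R n g ^ b * S R n g 0 * T R n g ^ a * S R n g 0 =
      ∑ i ∈ Finset.Icc 1 b,
        (T R n g ^ (a + b - i) *
            (1 + (-1 : SergeevP R n g) ^ (a - 1) * (C R n g 0 * C R n g 1)) *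
            S R n g 0 * T R n g ^ (i - 1) -
          T R n g ^ (i - 1) *
            (1 + (-1 : SergeevP R n g) ^ (a - 1) * (C R n g 0 * C R n g 1)) *
            S R n g 0 * T R n g ^ (a + b - i)) :=
  weak_braid_power_identity_general R n g a b ha
end

section
/- In the complex reflection group G(d,1,n) with generators s_0 of order d and s_1, …, s_{n−1} of order 2 (Coxeter relations of type B), for all a, b ≥ 0 the weak braid relation s_0^a s_1 s_0^b s_1 = s_1 s_0^b s_1 s_0^a holds. -/
/-! The order-four braid relation says exactly that `s₀` commutes with its conjugate
`s₁ s₀ s₁`; as `s₁` is an involution, `s₁ s₀^b s₁ = (s₁ s₀ s₁)^b`, and powers of commuting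
elements commute. -/

section WeakBraid

variable {G : Type*} [Group G] {x t : G}

theorem commute_conj_of_braid_four (h : x * t * x * t = t * x * t * x) :
    Commute x (t * x * t) := by
  calc x * (t * x * t) = x * t * x * t := by simp only [mul_assoc]
    _ = t * x * t * x := h

theorem mul_pow_mul_eq_pow_conj (ht : t * t = 1) (b : ℕ) : t * x ^ b * t = (t * x * t) ^ b := by
  have hinv : t⁻¹ = t := inv_eq_of_mul_eq_one_right ht
  simpa only [hinv] using (conj_pow (a := t) (b := x) (i := b)).symm

theorem weak_braid_of_braid_four (ht : t * t = 1) (h : x * t * x * t = t * x * t * x)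
    (a b : ℕ) : x ^ a * t * x ^ b * t = t * x ^ b * t * x ^ a := by
  calc x ^ a * t * x ^ b * t = x ^ a * (t * x ^ b * t) := by simp only [mul_assoc]
    _ = x ^ a * (t * x * t) ^ b := by rw [mul_pow_mul_eq_pow_conj ht]
    _ = (t * x * t) ^ b * x ^ a := ((commute_conj_of_braid_four h).pow_pow a b).eq
    _ = t * x ^ b * t * x ^ a := by rw [mul_pow_mul_eq_pow_conj ht]

end WeakBraid

theorem weak_braid_relation_G_d_1_n_general
    (G : Type*) [Group G] (n : ℕ) (hn : 2 ≤ n) (s : ℕ → G)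
    (hsq : ∀ i : ℕ, 1 ≤ i → i < n → s i ^ 2 = 1)
    (hbr0 : s 0 * s 1 * s 0 * s 1 = s 1 * s 0 * s 1 * s 0) :
    ∀ a b : ℕ, s 0 ^ a * s 1 * s 0 ^ b * s 1 = s 1 * s 0 ^ b * s 1 * s 0 ^ a := by
  have hs1 : s 1 * s 1 = 1 := by rw [← pow_two]; exact hsq 1 le_rfl (by omega)
  exact weak_braid_of_braid_four hs1 hbr0

/-- The weak braid relation in the complex reflection group `G(d,1,n)` (type
`G(d,1,n)` with `n ≥ 2`): in any group `G` with elements `s 0, …, s (n-1)`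
satisfying `s₀^d = 1`, `s_i² = 1` for `1 ≤ i < n`, the order-4 braid relation
between `s₀` and `s₁`, the type-A braid relations among `s₁, …, s_{n-1}`, and
commutation for `|i - j| > 1`, the relation `s₀^a s₁ s₀^b s₁ = s₁ s₀^b s₁ s₀^a`
holds for all `a, b ≥ 0`. -/
theorem weak_braid_relation_G_d_1_n
    (G : Type*) [Group G] (d n : ℕ) (hn : 2 ≤ n) (s : ℕ → G)
    (h0 : s 0 ^ d = 1)
    (hsq : ∀ i : ℕ, 1 ≤ i → i < n → s i ^ 2 = 1)
    (hbr0 : s 0 * s 1 * s 0 * s 1 = s 1 * s 0 * s 1 * s 0)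
    (hbr : ∀ i : ℕ, 1 ≤ i → i + 1 < n → s i * s (i+1) * s i = s (i+1) * s i * s (i+1))
    (hcomm : ∀ i j : ℕ, i + 1 < j → j < n → s i * s j = s j * s i) :
    ∀ a b : ℕ, s 0 ^ a * s 1 * s 0 ^ b * s 1 = s 1 * s 0 ^ b * s 1 * s 0 ^ a :=
  weak_braid_relation_G_d_1_n_general G n hn s hsq hbr0
end

section
/- Fix d = 2m+1 odd. There is a bijection between: (a) the set of pairs (λ, μ) where λ is a colored opposite partition with colors c(i) ∈ {1,…,d−1} (weakly decreasing colors on equal parts), μ a partition, |λ| + |μ| = n, such that λ_i + c(i) is odd for all i and μ has all parts odd; and (b) the set ⊔_{a=0}^{n} { (strict partition of a) × (m-multipartition of n−a) }. -/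
/-!
A colored opposite partition is the same thing as the multiset of its rows `(λ_i, c(i))`: the
ordering conditions say exactly that the list of rows is sorted by `RowLE`. For `d = 2m+1` with
`λ_i + c(i)` odd, a part `v` can carry precisely the `m` colors `2k + 1 + v % 2` with `k < m`, so
recording the level `k` of each row turns the rows into an `m`-multipartition of the same size.
The odd partition `μ` is traded for a strict partition of the same size by Euler's theorem, an
equality of cardinalities, so that bijection is chosen size by size.
-/

/-- A colored semi-bipartition datum: `lam` is an opposite partition (a weakly
increasing list of positive parts) with a color `col i ∈ {1, …, d-1}` attached
to its `i`-th part, colors being weakly decreasing along equal parts, together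
with a partition `mu` (given as a multiset of positive parts), with
`|lam| + |mu| = n`. -/
structure ColoredSemiBipartition (d n : ℕ) where
  lam : List ℕ
  col : List ℕ
  mu : Multiset ℕ
  col_len : col.length = lam.length
  lam_pos : ∀ a ∈ lam, 0 < a
  lam_mono : lam.Pairwise (· ≤ ·)
  col_range : ∀ x ∈ col, 1 ≤ x ∧ x ≤ d - 1
  col_dec : ∀ i : ℕ, i + 1 < lam.length →
    lam.getD i 0 = lam.getD (i+1) 0 → col.getD (i+1) 0 ≤ col.getD i 0
  mu_pos : ∀ a ∈ mu, 0 < a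
  total : lam.sum + mu.sum = n

/-- The subset of colored semi-bipartitions with `λ_i + c(i)` odd for every row
and all parts of `μ` odd. -/
def TildeP (d n : ℕ) : Type :=
  {p : ColoredSemiBipartition d n //
    (∀ i : ℕ, i < p.lam.length → (p.lam.getD i 0 + p.col.getD i 0) % 2 = 1) ∧
    ∀ a ∈ p.mu, Odd a}

/-- `m`-multipartitions of `n` (each component a partition, recorded as a
multiset of positive parts). -/
def MultiPartition (m n : ℕ) : Type :=
  {f : Fin m → Multiset ℕ //
    (∀ i, ∀ a ∈ f i, 0 < a) ∧ (∑ i, (f i).sum) = n}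

/-- Pairs of a strict partition and an `m`-multipartition of total size `n`. -/
def StrictTimesMulti (m n : ℕ) : Type :=
  {q : Multiset ℕ × (Fin m → Multiset ℕ) //
    q.1.Nodup ∧ (∀ a ∈ q.1, 0 < a) ∧ (∀ i, ∀ a ∈ q.2 i, 0 < a) ∧
    q.1.sum + ∑ i, (q.2 i).sum = n}

namespace Multiset

variable {α ι : Type*} [Fintype ι] [DecidableEq ι]

def prodEquivPi : Multiset (α × ι) ≃ (ι → Multiset α) where
  toFun s i := (s.filter (·.2 = i)).map Prod.fst
  invFun f := ∑ i, (f i).map (·, i)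
  left_inv s := by
    have hfilter (i : ι) :
        ((s.filter (·.2 = i)).map Prod.fst).map (·, i) = s.filter (·.2 = i) := by
      rw [map_map]
      conv_rhs => rw [← map_id (s.filter _)]
      exact map_congr rfl fun p hp => by simp [(mem_filter.1 hp).2.symm]
    simp only [hfilter]
    classical
    ext p
    simp [count_sum', count_filter]
  right_inv f := by
    funext i
    let filterHom : Multiset (α × ι) →+ Multiset (α × ι) :=
      ⟨⟨filter (·.2 = i), filter_zero _⟩, filter_add _⟩
    change mapAddMonoidHom Prod.fst (filterHom _) = _
    simp only [map_sum]
    simp only [filterHom, mapAddMonoidHom, AddMonoidHom.coe_mk, ZeroHom.coe_mk, filter_map,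
      map_map, Function.comp_def, map_id']
    rw [Finset.sum_eq_single i (fun j _ hj => filter_eq_nil.2 fun _ _ => hj) (by simp),
      filter_eq_self.2 fun _ _ => rfl]

theorem mem_prodEquivPi {s : Multiset (α × ι)} {i : ι} {a : α} :
    a ∈ prodEquivPi s i ↔ (a, i) ∈ s := by
  simp [prodEquivPi]

theorem map_fst_prodEquivPi_symm (f : ι → Multiset α) :
    (prodEquivPi.symm f).map Prod.fst = ∑ i, f i := by
  change mapAddMonoidHom Prod.fst (∑ i, (f i).map (·, i)) = _
  simp [map_sum, mapAddMonoidHom, map_map]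

end Multiset

theorem List.zip_map_fst_map_snd {α β : Type*} (l : List (α × β)) :
    (l.map Prod.fst).zip (l.map Prod.snd) = l := by
  simpa [List.unzip_eq_map] using List.zip_unzip l

def RowLE (p q : ℕ × ℕ) : Prop := p.1 ≤ q.1 ∧ (p.1 = q.1 → q.2 ≤ p.2)

instance : DecidableRel RowLE := fun _ _ => inferInstanceAs (Decidable (_ ∧ _))
instance : IsTrans (ℕ × ℕ) RowLE := ⟨fun _ _ _ => by unfold RowLE; omega⟩
instance : Std.Antisymm RowLE := ⟨fun _ _ h h' => by unfold RowLE at h h'; ext <;> omega⟩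
instance : Std.Total RowLE := ⟨fun _ _ => by unfold RowLE; omega⟩

theorem pairwise_rowLE_iff {l : List (ℕ × ℕ)} :
    l.Pairwise RowLE ↔ (l.map Prod.fst).Pairwise (· ≤ ·) ∧
      ∀ i, i + 1 < l.length → (l.map Prod.fst).getD i 0 = (l.map Prod.fst).getD (i + 1) 0 →
        (l.map Prod.snd).getD (i + 1) 0 ≤ (l.map Prod.snd).getD i 0 := by
  rw [← List.isChain_iff_pairwise, ← List.isChain_iff_pairwise, List.isChain_iff_getElem,
    List.isChain_iff_getElem]
  simp only [RowLE, List.length_map, List.getElem_map, forall_and]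
  refine and_congr_right fun _ => forall_congr' fun i => ⟨fun H hi => ?_, fun H hi => ?_⟩ <;>
    simpa [List.getD_eq_getElem, hi, Nat.lt_of_succ_lt hi] using H hi

namespace ColoredSemiBipartition

variable {d n : ℕ}

def rows (p : ColoredSemiBipartition d n) : Multiset (ℕ × ℕ) := p.lam.zip p.col

theorem map_fst_rows (p : ColoredSemiBipartition d n) : p.rows.map Prod.fst = p.lam := by
  simp [rows, List.map_fst_zip, p.col_len]

theorem mem_rows {p : ColoredSemiBipartition d n} {x : ℕ × ℕ} (hx : x ∈ p.rows) :
    x.1 ∈ p.lam ∧ x.2 ∈ p.col :=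
  List.of_mem_zip hx

theorem forall_mem_rows_iff (p : ColoredSemiBipartition d n) {P : ℕ → ℕ → Prop} :
    (∀ x ∈ p.rows, P x.1 x.2) ↔
      ∀ i < p.lam.length, P (p.lam.getD i 0) (p.col.getD i 0) := by
  have hcol := p.col_len
  simp only [rows, Multiset.mem_coe, List.mem_iff_getElem, List.length_zip, hcol, min_self]
  constructor
  · intro H i hi
    simpa [List.getD_eq_getElem, hi, hcol] using H _ ⟨i, hi, rfl⟩
  · rintro H _ ⟨i, hi, rfl⟩
    simpa [List.getD_eq_getElem, hi, hcol] using H i hi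

def ofRows (s : Multiset (ℕ × ℕ)) (mu : Multiset ℕ)
    (hs : ∀ x ∈ s, 0 < x.1 ∧ 1 ≤ x.2 ∧ x.2 ≤ d - 1) (hmu : ∀ a ∈ mu, 0 < a)
    (htotal : (s.map Prod.fst).sum + mu.sum = n) : ColoredSemiBipartition d n where
  lam := (s.sort RowLE).map Prod.fst
  col := (s.sort RowLE).map Prod.snd
  mu := mu
  col_len := by simp
  lam_pos := by
    simp only [List.mem_map, Multiset.mem_sort]
    rintro _ ⟨x, hx, rfl⟩
    exact (hs x hx).1
  lam_mono := by simpa using (pairwise_rowLE_iff.1 (s.pairwise_sort RowLE)).1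
  col_range := by
    simp only [List.mem_map, Multiset.mem_sort]
    rintro _ ⟨x, hx, rfl⟩
    exact (hs x hx).2
  col_dec := by simpa using (pairwise_rowLE_iff.1 (s.pairwise_sort RowLE)).2
  mu_pos := hmu
  total := by rw [← htotal, ← Multiset.sum_coe, ← Multiset.map_coe, Multiset.sort_eq]

theorem rows_ofRows (s : Multiset (ℕ × ℕ)) (mu : Multiset ℕ)
    (hs : ∀ x ∈ s, 0 < x.1 ∧ 1 ≤ x.2 ∧ x.2 ≤ d - 1) (hmu : ∀ a ∈ mu, 0 < a)
    (htotal : (s.map Prod.fst).sum + mu.sum = n) : (ofRows s mu hs hmu htotal).rows = s := by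
  simp [rows, ofRows, List.zip_map_fst_map_snd]

theorem ofRows_rows (p : ColoredSemiBipartition d n)
    (hs : ∀ x ∈ p.rows, 0 < x.1 ∧ 1 ≤ x.2 ∧ x.2 ≤ d - 1)
    (htotal : (p.rows.map Prod.fst).sum + p.mu.sum = n) :
    ofRows p.rows p.mu hs p.mu_pos htotal = p := by
  have hlen := p.col_len
  have hsorted : (p.lam.zip p.col).Pairwise RowLE := by
    rw [pairwise_rowLE_iff, List.map_fst_zip hlen.ge, List.map_snd_zip hlen.le]
    exact ⟨p.lam_mono, by simpa [hlen] using p.col_dec⟩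
  have hsort : p.rows.sort RowLE = p.lam.zip p.col := List.mergeSort_eq_self _ hsorted
  cases p
  simp only [ofRows, hsort, List.map_fst_zip hlen.ge, List.map_snd_zip hlen.le]

end ColoredSemiBipartition

def IsAdmissibleRow (m : ℕ) (x : ℕ × ℕ) : Prop :=
  0 < x.1 ∧ 1 ≤ x.2 ∧ x.2 ≤ 2 * m ∧ (x.1 + x.2) % 2 = 1

abbrev AdmissibleRows (m : ℕ) : Type :=
  {s : Multiset (ℕ × ℕ) // ∀ x ∈ s, IsAdmissibleRow m x}

abbrev OddParts : Type := {s : Multiset ℕ // ∀ a ∈ s, Odd a}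

def tildePEquivRows (m n : ℕ) :
    TildeP (2 * m + 1) n ≃
      {q : OddParts × AdmissibleRows m // q.1.1.sum + (q.2.1.map Prod.fst).sum = n} where
  toFun p :=
    ⟨(⟨p.1.mu, p.2.2⟩, ⟨p.1.rows, fun x hx => by
      have hparity := (p.1.forall_mem_rows_iff (P := fun a c => (a + c) % 2 = 1)).2 p.2.1 x hx
      have hpos := p.1.lam_pos _ (ColoredSemiBipartition.mem_rows hx).1
      have hcol := p.1.col_range _ (ColoredSemiBipartition.mem_rows hx).2
      exact ⟨hpos, hcol.1, by omega, hparity⟩⟩), by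
      rw [ColoredSemiBipartition.map_fst_rows, Multiset.sum_coe]
      exact (add_comm _ _).trans p.1.total⟩
  invFun q :=
    ⟨ColoredSemiBipartition.ofRows q.1.2.1 q.1.1.1
      (fun x hx => by have hx := q.1.2.2 x hx; unfold IsAdmissibleRow at hx; omega)
      (fun a ha => (q.1.1.2 a ha).pos) ((add_comm _ _).trans q.2),
      (ColoredSemiBipartition.forall_mem_rows_iff _ (P := fun a c => (a + c) % 2 = 1)).1
        (by rw [ColoredSemiBipartition.rows_ofRows]; exact fun x hx => (q.1.2.2 x hx).2.2.2),
      q.1.1.2⟩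
  left_inv p := Subtype.ext (by dsimp only; exact ColoredSemiBipartition.ofRows_rows _ _ _)
  right_inv q := Subtype.ext <| Prod.ext rfl <| Subtype.ext <| by
    dsimp only; exact ColoredSemiBipartition.rows_ofRows ..

def levelRow (m : ℕ) (x : ℕ × Fin m) : ℕ × ℕ := (x.1, 2 * x.2 + 1 + x.1 % 2)

theorem levelRow_injective (m : ℕ) : Function.Injective (levelRow m) := by
  rintro ⟨a, k⟩ ⟨b, l⟩ h
  simp only [levelRow, Prod.mk.injEq] at h
  obtain ⟨rfl, h⟩ := h
  exact Prod.ext rfl (Fin.ext (by dsimp only at h ⊢; omega))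

instance (m : ℕ) : CanLift (ℕ × ℕ) (ℕ × Fin m) (levelRow m) (IsAdmissibleRow m) where
  prf x hx := by
    unfold IsAdmissibleRow at hx
    exact ⟨(x.1, ⟨(x.2 - 1) / 2, by omega⟩), Prod.ext rfl (by simp only [levelRow]; omega)⟩

abbrev MultiParts (m : ℕ) : Type := {f : Fin m → Multiset ℕ // ∀ i, ∀ a ∈ f i, 0 < a}

def multiPartsEquivLabelled (m : ℕ) :
    {t : Multiset (ℕ × Fin m) // ∀ x ∈ t, 0 < x.1} ≃ MultiParts m :=
  Multiset.prodEquivPi.subtypeEquiv fun t => by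
    simp only [Prod.forall, Multiset.mem_prodEquivPi]
    exact forall_comm

noncomputable def labelledEquivRows (m : ℕ) :
    {t : Multiset (ℕ × Fin m) // ∀ x ∈ t, 0 < x.1} ≃ AdmissibleRows m :=
  Equiv.ofBijective
    (fun t => ⟨t.1.map (levelRow m), by
      simp only [Multiset.mem_map]
      rintro _ ⟨⟨a, k⟩, hx, rfl⟩
      have hk := k.2
      have ha := t.2 _ hx
      simp only [IsAdmissibleRow, levelRow]
      omega⟩)
    ⟨fun _ _ h => Subtype.ext <|
        Multiset.map_injective (levelRow_injective m) (congrArg Subtype.val h),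
      fun s => by
        obtain ⟨t, ht⟩ := CanLift.prf (coe := Multiset.map (levelRow m)) s.1 s.2
        refine ⟨⟨t, fun x hx => ?_⟩, Subtype.ext ht⟩
        exact (s.2 _ (ht ▸ Multiset.mem_map_of_mem _ hx)).1⟩

noncomputable def multiPartsEquivRows (m : ℕ) : MultiParts m ≃ AdmissibleRows m :=
  (multiPartsEquivLabelled m).symm.trans (labelledEquivRows m)

theorem sum_map_fst_multiPartsEquivRows (m : ℕ) (f : MultiParts m) :
    ((multiPartsEquivRows m f).1.map Prod.fst).sum = ∑ i, (f.1 i).sum := by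
  change (((Multiset.prodEquivPi.symm f.1).map (levelRow m)).map Prod.fst).sum = _
  rw [Multiset.map_map, show Prod.fst ∘ levelRow m = Prod.fst from rfl,
    Multiset.map_fst_prodEquivPi_symm]
  exact map_sum Multiset.sumAddMonoidHom _ _

abbrev StrictParts : Type := {s : Multiset ℕ // s.Nodup ∧ ∀ a ∈ s, 0 < a}

def fiberEquivPartition (Q : Multiset ℕ → Prop) (hQ : ∀ s, Q s → ∀ a ∈ s, 0 < a)
    (n : ℕ) :
    {s : {s : Multiset ℕ // Q s} // s.1.sum = n} ≃ {p : n.Partition // Q p.parts} where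
  toFun s := ⟨⟨s.1.1, fun hi => hQ _ s.1.2 _ hi, s.2⟩, s.1.2⟩
  invFun p := ⟨⟨p.1.parts, p.2⟩, p.1.parts_sum⟩
  left_inv _ := rfl
  right_inv _ := rfl

theorem card_partition_odd_eq_card_partition_strict (n : ℕ) :
    Nat.card {p : n.Partition // ∀ a ∈ p.parts, Odd a} =
      Nat.card {p : n.Partition // p.parts.Nodup ∧ ∀ a ∈ p.parts, 0 < a} := by
  classical
  have h := Nat.Partition.card_odds_eq_card_distincts n
  simp only [Nat.Partition.odds, Nat.Partition.restricted, Nat.Partition.distincts,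
    Nat.not_even_iff_odd] at h
  rw [Nat.card_eq_fintype_card, Nat.card_eq_fintype_card, Fintype.card_subtype,
    Fintype.card_subtype, h]
  congr 1
  ext p
  simpa using fun _ a => p.parts_pos

noncomputable def oddPartsEquivStrictParts : OddParts ≃ StrictParts :=
  Equiv.ofFiberEquiv fun n =>
    (fiberEquivPartition (fun s => ∀ a ∈ s, Odd a) (fun _ h a ha => (h a ha).pos) n).trans <|
      (Classical.choice (Finite.card_eq.1 (card_partition_odd_eq_card_partition_strict n))).trans
        (fiberEquivPartition (fun s => s.Nodup ∧ ∀ a ∈ s, 0 < a) (fun _ h => h.2) n).symm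

theorem sum_oddPartsEquivStrictParts (s : OddParts) :
    (oddPartsEquivStrictParts s).1.sum = s.1.sum :=
  Equiv.ofFiberEquiv_map (f := fun s : OddParts => s.1.sum)
    (g := fun s : StrictParts => s.1.sum) _ s

def strictTimesMultiEquiv (m n : ℕ) :
    {q : StrictParts × MultiParts m // q.1.1.sum + ∑ i, (q.2.1 i).sum = n} ≃
      StrictTimesMulti m n where
  toFun q := ⟨(q.1.1.1, q.1.2.1), q.1.1.2.1, q.1.1.2.2, q.1.2.2, q.2⟩
  invFun q := ⟨(⟨q.1.1, q.2.1, q.2.2.1⟩, ⟨q.1.2, q.2.2.2.1⟩), q.2.2.2.2⟩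
  left_inv _ := rfl
  right_inv _ := rfl

/-- For `d = 2m+1` odd, the set of colored semi-bipartitions `(λ, μ)` of `n`
with `λ_i + c(i)` odd for all `i` and `μ` an odd partition is in bijection with
`⊔_{a=0}^{n} (strict partitions of a) × (m-multipartitions of n-a)`, i.e. with
pairs of a strict partition and an `m`-multipartition of total size `n`. -/
theorem colored_semibipartitions_biject_strict_times_multipartitions_odd_level
    (m n : ℕ) : Nonempty (TildeP (2 * m + 1) n ≃ StrictTimesMulti m n) := by
  have hsize (q : OddParts × AdmissibleRows m) :
      q.1.1.sum + (q.2.1.map Prod.fst).sum = n ↔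
        (oddPartsEquivStrictParts q.1).1.sum +
          ∑ i, (((multiPartsEquivRows m).symm q.2).1 i).sum = n := by
    rw [sum_oddPartsEquivStrictParts, ← sum_map_fst_multiPartsEquivRows, Equiv.apply_symm_apply]
  exact ⟨(tildePEquivRows m n).trans <|
    ((oddPartsEquivStrictParts.prodCongr (multiPartsEquivRows m).symm).subtypeEquiv hsize).trans
      (strictTimesMultiEquiv m n)⟩
end

section
/- For any d-multipartition index set, if d = 2m+1 is odd then the set M of d-multipartitions (λ^{(1)}, …, λ^{(d)}) of n such that λ^{(i)} has all parts odd when i is odd and all parts even when i is even, is in bijection with ⊔_{a=0}^{n} { (strict partitions of a) × (m-multipartitions of n−a) }. -/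
/-- `d`-multipartitions `(λ^{(1)}, …, λ^{(d)})` of `n` (0-based: component `i`
is the paper's component `i+1`) such that odd-numbered components have all
parts odd and even-numbered components have all parts even. -/
def ParityMultiPartition (d n : ℕ) : Type :=
  {f : Fin d → Multiset ℕ //
    (∀ i, ∀ a ∈ f i, 0 < a) ∧ (∑ i, (f i).sum) = n ∧
    ∀ i : Fin d, (Even (i : ℕ) → ∀ a ∈ f i, Odd a) ∧
      (Odd (i : ℕ) → ∀ a ∈ f i, Even a)}

def finTwoMulAddOneEquiv (m : ℕ) : Option (Fin m × Fin 2) ≃ Fin (2 * m + 1) :=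
  (Equiv.optionCongr (finProdFinEquiv.trans (finCongr (Nat.mul_comm m 2)))).trans
    (finSuccEquiv (2 * m)).symm

@[simp]
lemma finTwoMulAddOneEquiv_none (m : ℕ) : finTwoMulAddOneEquiv m none = 0 := rfl

@[simp]
lemma val_finTwoMulAddOneEquiv_some {m : ℕ} (k : Fin m) (r : Fin 2) :
    (finTwoMulAddOneEquiv m (some (k, r)) : ℕ) = 2 * k + r + 1 := by
  simp [finTwoMulAddOneEquiv, add_comm]

lemma Fin.forall_fin_two_mul_add_one {m : ℕ} {P : Fin (2 * m + 1) → Prop} :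
    (∀ i, P i) ↔ P 0 ∧ ∀ k : Fin m,
      P (finTwoMulAddOneEquiv m (some (k, 0))) ∧ P (finTwoMulAddOneEquiv m (some (k, 1))) := by
  rw [← (finTwoMulAddOneEquiv m).forall_congr_right]
  simp only [Option.forall, Prod.forall, Fin.forall_fin_two, finTwoMulAddOneEquiv_none]

lemma Fin.sum_univ_two_mul_add_one {M : Type*} [AddCommMonoid M] {m : ℕ}
    (f : Fin (2 * m + 1) → M) :
    ∑ i, f i = f 0 + ∑ k : Fin m,
      (f (finTwoMulAddOneEquiv m (some (k, 0))) + f (finTwoMulAddOneEquiv m (some (k, 1)))) := by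
  rw [← (finTwoMulAddOneEquiv m).sum_comp, Fintype.sum_option, Fintype.sum_prod_type]
  simp only [Fin.sum_univ_two, finTwoMulAddOneEquiv_none]

def piFinTwoMulAddOneEquiv (α : Type*) (m : ℕ) : (Fin (2 * m + 1) → α) ≃ α × (Fin m → α × α) :=
  ((finTwoMulAddOneEquiv m).arrowCongr (Equiv.refl α)).symm.trans <|
    Equiv.piOptionEquivProd.trans <| Equiv.prodCongr (Equiv.refl α) <|
      (Equiv.curry _ _ _).trans (Equiv.piCongrRight fun _ => piFinTwoEquiv fun _ => α)

@[simp]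
lemma piFinTwoMulAddOneEquiv_apply {α : Type*} {m : ℕ} (f : Fin (2 * m + 1) → α) :
    piFinTwoMulAddOneEquiv α m f = (f 0, fun k =>
      (f (finTwoMulAddOneEquiv m (some (k, 0))), f (finTwoMulAddOneEquiv m (some (k, 1))))) :=
  rfl

lemma Multiset.filter_add_of_forall {α : Type*} {p : α → Prop} [DecidablePred p]
    {s t : Multiset α} (hs : ∀ x ∈ s, p x) (ht : ∀ x ∈ t, ¬p x) : (s + t).filter p = s := by
  rw [Multiset.filter_add, Multiset.filter_eq_self.2 hs, Multiset.filter_eq_nil.2 ht, add_zero]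

lemma Multiset.filter_not_add_of_forall {α : Type*} {p : α → Prop} [DecidablePred p]
    {s t : Multiset α} (hs : ∀ x ∈ s, p x) (ht : ∀ x ∈ t, ¬p x) :
    (s + t).filter (¬p ·) = t := by
  rw [Multiset.filter_add, Multiset.filter_eq_nil.2 fun x hx h => h (hs x hx),
    Multiset.filter_eq_self.2 ht, zero_add]

def Equiv.subtypeProdEquivSigmaFiber {α β γ : Type*} (P : α → Prop) (w : α → γ)
    (R : γ → β → Prop) :
    {q : α × β // P q.1 ∧ R (w q.1) q.2} ≃ Σ c, {a // P a ∧ w a = c} × {b // R c b} where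
  toFun q := ⟨w q.1.1, ⟨q.1.1, q.2.1, rfl⟩, ⟨q.1.2, q.2.2⟩⟩
  invFun x := ⟨(x.2.1.1, x.2.2.1), x.2.1.2.1, by rw [x.2.1.2.2]; exact x.2.2.2⟩
  left_inv _ := rfl
  right_inv := by
    rintro ⟨c, ⟨a, ha, rfl⟩, b⟩
    rfl

def Equiv.subtypeProdCongrFstOfFiberwise {α β γ : Type*} {P Q : α → Prop} (w : α → γ)
    (R : γ → β → Prop) (e : ∀ c, {a // P a ∧ w a = c} ≃ {a // Q a ∧ w a = c}) :
    {q : α × β // P q.1 ∧ R (w q.1) q.2} ≃ {q : α × β // Q q.1 ∧ R (w q.1) q.2} :=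
  (subtypeProdEquivSigmaFiber P w R).trans <|
    (sigmaCongrRight fun c => (e c).prodCongr (Equiv.refl _)).trans
      (subtypeProdEquivSigmaFiber Q w R).symm

def Nat.Partition.subtypeEquivMultiset (c : ℕ) (P : Multiset ℕ → Prop) :
    {p : c.Partition // P p.parts} ≃
      {s : Multiset ℕ // (P s ∧ ∀ x ∈ s, 0 < x) ∧ s.sum = c} where
  toFun p := ⟨p.1.parts, ⟨p.2, fun _ => p.1.parts_pos⟩, p.1.parts_sum⟩
  invFun s := ⟨⟨s.1, s.2.1.2 _, s.2.2⟩, s.2.1.1⟩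
  left_inv _ := rfl
  right_inv _ := rfl

lemma nonempty_oddMultiset_equiv_strictMultiset (c : ℕ) :
    Nonempty ({s : Multiset ℕ // (∀ x ∈ s, Odd x) ∧ s.sum = c} ≃
      {s : Multiset ℕ // (s.Nodup ∧ ∀ x ∈ s, 0 < x) ∧ s.sum = c}) := by
  have odds : Nat.Partition.odds c ≃
      {s : Multiset ℕ // ((∀ x ∈ s, Odd x) ∧ ∀ x ∈ s, 0 < x) ∧ s.sum = c} :=
    (Equiv.subtypeEquivRight fun _ => by
      simp [Nat.Partition.odds, Nat.Partition.restricted]).trans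
      (Nat.Partition.subtypeEquivMultiset c _)
  have distincts : Nat.Partition.distincts c ≃
      {s : Multiset ℕ // (s.Nodup ∧ ∀ x ∈ s, 0 < x) ∧ s.sum = c} :=
    (Equiv.subtypeEquivRight fun _ => by simp [Nat.Partition.distincts]).trans
      (Nat.Partition.subtypeEquivMultiset c _)
  have odd_pos (s : Multiset ℕ) : ((∀ x ∈ s, Odd x) ∧ ∀ x ∈ s, 0 < x) ↔ ∀ x ∈ s, Odd x :=
    and_iff_left_of_imp fun h x hx => (h x hx).pos
  exact ⟨(Equiv.subtypeEquivRight fun s => and_congr_left' (odd_pos s).symm).trans <|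
    odds.symm.trans <|
      (Finset.equivOfCardEq (Nat.Partition.card_odds_eq_card_distincts c)).trans distincts⟩

def OddTimesPairs (m n : ℕ) : Type :=
  {q : Multiset ℕ × (Fin m → Multiset ℕ × Multiset ℕ) //
    (∀ a ∈ q.1, Odd a) ∧ (∀ k, (∀ a ∈ (q.2 k).1, 0 < a ∧ Even a) ∧ ∀ a ∈ (q.2 k).2, Odd a) ∧
      q.1.sum + ∑ k, ((q.2 k).1.sum + (q.2 k).2.sum) = n}

def parityMultiPartitionEquivOddTimesPairs (m n : ℕ) :
    ParityMultiPartition (2 * m + 1) n ≃ OddTimesPairs m n :=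
  Equiv.subtypeEquiv (piFinTwoMulAddOneEquiv _ m) fun f => by
    simp only [piFinTwoMulAddOneEquiv_apply, Fin.forall_fin_two_mul_add_one,
      Fin.sum_univ_two_mul_add_one, val_finTwoMulAddOneEquiv_some, Fin.val_zero, Fin.val_one,
      add_zero, Even.zero, Nat.not_odd_zero, Nat.even_add_one, Nat.odd_add_one, Nat.even_mul,
      even_two, true_or, not_true_eq_false, not_false_eq_true, forall_const, IsEmpty.forall_iff,
      true_and, and_true]
    grind [Odd.pos]

def OddTimesMulti (m n : ℕ) : Type :=
  {q : Multiset ℕ × (Fin m → Multiset ℕ) //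
    (∀ a ∈ q.1, Odd a) ∧ (∀ i, ∀ a ∈ q.2 i, 0 < a) ∧ q.1.sum + ∑ i, (q.2 i).sum = n}

def oddTimesPairsEquivOddTimesMulti (m n : ℕ) : OddTimesPairs m n ≃ OddTimesMulti m n where
  toFun q := ⟨(q.1.1, fun k => (q.1.2 k).1 + (q.1.2 k).2), by
    obtain ⟨⟨s, g⟩, hs, hg, hsum⟩ := q
    refine ⟨hs, fun k a ha => ?_, by simpa only [Multiset.sum_add] using hsum⟩
    rcases Multiset.mem_add.1 ha with ha | ha
    exacts [((hg k).1 a ha).1, ((hg k).2 a ha).pos]⟩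
  invFun q := ⟨(q.1.1, fun k => ((q.1.2 k).filter Even, (q.1.2 k).filter (¬Even ·))), by
    obtain ⟨⟨s, g⟩, hs, hg, hsum⟩ := q
    refine ⟨hs, fun k => ⟨fun a ha => ?_, fun a ha => ?_⟩, ?_⟩
    · exact ⟨hg k a (Multiset.mem_of_mem_filter ha), (Multiset.mem_filter.1 ha).2⟩
    · exact Nat.not_even_iff_odd.1 (Multiset.mem_filter.1 ha).2
    · simpa only [← Multiset.sum_add, Multiset.filter_add_not] using hsum⟩
  left_inv := by
    rintro ⟨⟨s, g⟩, -, hg, -⟩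
    apply Subtype.ext
    have hev : ∀ k, ∀ a ∈ (g k).1, Even a := fun k a ha => ((hg k).1 a ha).2
    have hodd : ∀ k, ∀ a ∈ (g k).2, ¬Even a :=
      fun k a ha => Nat.not_even_iff_odd.2 ((hg k).2 a ha)
    exact Prod.ext rfl <| funext fun k => Prod.ext
      (Multiset.filter_add_of_forall (hev k) (hodd k))
      (Multiset.filter_not_add_of_forall (hev k) (hodd k))
  right_inv := by
    rintro ⟨⟨s, g⟩, -⟩
    apply Subtype.ext
    exact Prod.ext rfl (funext fun k => Multiset.filter_add_not _ _)

noncomputable def oddTimesMultiEquivStrictTimesMulti (m n : ℕ) :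
    OddTimesMulti m n ≃ StrictTimesMulti m n :=
  (Equiv.subtypeProdCongrFstOfFiberwise Multiset.sum
    (fun c (g : Fin m → Multiset ℕ) => (∀ i, ∀ a ∈ g i, 0 < a) ∧ c + ∑ i, (g i).sum = n)
    fun c => (nonempty_oddMultiset_equiv_strictMultiset c).some).trans
    (Equiv.subtypeEquivRight fun _ => and_assoc)

/-- For `d = 2m+1` odd, the set of `d`-multipartitions of `n` whose
odd-numbered components are odd partitions and whose even-numbered components
are even partitions is in bijection with
`⊔_{a=0}^{n} (strict partitions of a) × (m-multipartitions of n-a)`. -/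
theorem parity_multipartitions_biject_strict_times_multipartitions
    (m n : ℕ) :
    Nonempty (ParityMultiPartition (2 * m + 1) n ≃ StrictTimesMulti m n) :=
  ⟨(parityMultiPartitionEquivOddTimesPairs m n).trans <|
    (oddTimesPairsEquivOddTimesMulti m n).trans (oddTimesMultiEquivStrictTimesMulti m n)⟩
end
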